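/- Let G be a connected graph with n ≥ 2 vertices, m ≥ 1 edges, maximum degree Δ and minimum degree δ, with γ_n ≥ √c/(2n) where c = m(n³ − n² − 2mn + 4m) and γ_i = |q_i − 2m/n| ordered nonincreasingly. Then QE(G) ≥ (2√2/3)·√((2m + (Δ−δ)²/2)·n), with equality if and only if G ≅ K_3. -/

import Mathlib

open Finset Matrix BigOperators

/-- The signless Laplacian matrix `Q(G) = D(G) + A(G)` of a simple graph, over `ℝ`. -/
noncomputable def signlessLaplacian {V : Type*} [Fintype V] [DecidableEq V]
    (G : SimpleGraph V) [DecidableRel G.Adj] : Matrix V V ℝ :=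
  Matrix.diagonal (fun v => (G.degree v : ℝ)) + G.adjMatrix ℝ

lemma signlessLaplacian_isHermitian {V : Type*} [Fintype V] [DecidableEq V]
    (G : SimpleGraph V) [DecidableRel G.Adj] : (signlessLaplacian G).IsHermitian := by
  unfold signlessLaplacian
  apply Matrix.IsHermitian.add
  · exact Matrix.isHermitian_diagonal _
  · rw [Matrix.IsHermitian, conjTranspose_eq_transpose_of_trivial]
    exact G.isSymm_adjMatrix

/-- The signless Laplacian eigenvalues of `G` (as a function on the vertex index type). -/
noncomputable def qEig {V : Type*} [Fintype V] [DecidableEq V]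
    (G : SimpleGraph V) [DecidableRel G.Adj] : V → ℝ :=
  (signlessLaplacian_isHermitian G).eigenvalues

/-- The number of edges of `G`, as a real number. -/
noncomputable def mE {V : Type*} [Fintype V] [DecidableEq V]
    (G : SimpleGraph V) [DecidableRel G.Adj] : ℝ :=
  G.edgeFinset.card

/-- The first Zagreb index `M₁(G) = Σ d(v)²`, as a real number. -/
noncomputable def M1 {V : Type*} [Fintype V] [DecidableEq V]
    (G : SimpleGraph V) [DecidableRel G.Adj] : ℝ :=
  ∑ v, (G.degree v : ℝ) ^ 2

/-- The signless Laplacian energy `QE(G) = Σ |qᵢ - 2m/n|`. -/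
noncomputable def QE {V : Type*} [Fintype V] [DecidableEq V]
    (G : SimpleGraph V) [DecidableRel G.Adj] : ℝ :=
  ∑ i, |qEig G i - 2 * mE G / (Fintype.card V : ℝ)|

/-!
Write `μ = 2m/n` and `xᵢ = qᵢ - μ`, so that `∑ xᵢ = 0` and `T = ∑ xᵢ² = 2m + ∑ᵥ (dᵥ - μ)²`.
The Laguerre–Samuelson inequality and de Caen's bound on `M₁` give `n² xᵢ² ≤ n(n-1) T ≤ c`,
so with `a = √c/(2n)` the hypothesis puts every `|xᵢ|` in `[a, 2a]`. There
`|xᵢ|² + 2a² ≤ 3a|xᵢ|`; summing, and bounding `T + 2na² ≥ 2a√(2nT)` by AM–GM, gives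
`3 QE ≥ 2√(2nT)`, while `T ≥ 2m + (Δ-δ)²/2` because the two extreme degrees alone contribute
`(Δ-δ)²/2` to `∑ᵥ (dᵥ - μ)²`.

At equality every step is tight: `T = 2na²` and each `|xᵢ| ∈ {a, 2a}`, so some `|xᵢ| = 2a`.
Laguerre–Samuelson for that `xᵢ` and `n(n-1) T ≤ c = 4n²a²` then force `n = 3`, after which
`3(2M₁ - (Δ-δ)²) = 8m²` forces `m = 3`. Conversely `Q(K₃) = I + J` has spectrum `{4, 1, 1}`,
which attains the bound.
-/

theorem Matrix.IsHermitian.trace_pow_eq_sum_eigenvalues_pow {n : Type*} [Fintype n]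
    [DecidableEq n] {A : Matrix n n ℝ} (hA : A.IsHermitian) (k : ℕ) :
    (A ^ k).trace = ∑ i, hA.eigenvalues i ^ k := by
  have h : Unitary.conjStarAlgAut ℝ _ (star hA.eigenvectorUnitary) (A ^ k) =
      diagonal (RCLike.ofReal ∘ hA.eigenvalues) ^ k := by
    rw [map_pow, conjStarAlgAut_star_eigenvectorUnitary]
  have := congrArg trace h
  rw [Unitary.conjStarAlgAut_star_apply, trace_mul_cycle,
    Unitary.mul_star_self_of_mem hA.eigenvectorUnitary.2, Matrix.one_mul, diagonal_pow,
    trace_diagonal] at this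
  simpa using this

theorem Matrix.IsHermitian.eigenvalues_eq_or_eq {n : Type*} [Fintype n] [DecidableEq n]
    {A : Matrix n n ℝ} (hA : A.IsHermitian) {a b : ℝ} (h : (A - a • 1) * (A - b • 1) = 0)
    (i : n) : hA.eigenvalues i = a ∨ hA.eigenvalues i = b := by
  have : Nonempty n := ⟨i⟩
  set p := (Polynomial.X - Polynomial.C a) * (Polynomial.X - Polynomial.C b)
  have hp : Polynomial.aeval A p = 0 := by
    simpa [p, Algebra.algebraMap_eq_smul_one] using h
  have := spectrum.subset_polynomial_aeval A p ⟨_, hA.eigenvalues_mem_spectrum_real i, rfl⟩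
  rw [hp, spectrum.zero_eq, Set.mem_singleton_iff] at this
  simpa [p, sub_eq_zero] using this

section RealVectors

variable {ι : Type*} [Fintype ι]

theorem sum_sub_div_card_eq_zero {x : ι → ℝ} {s : ℝ} (hs : ∑ i, x i = s) :
    ∑ i, (x i - s / Fintype.card ι) = 0 := by
  rcases isEmpty_or_nonempty ι with hι | hι
  · simp
  rw [sum_sub_distrib, hs, sum_const, card_univ, nsmul_eq_mul, mul_div_cancel₀ _ (by positivity),
    sub_self]

theorem sum_sq_sub_div_card_eq {x : ι → ℝ} {s : ℝ} (hs : ∑ i, x i = s) :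
    ∑ i, (x i - s / Fintype.card ι) ^ 2 = ∑ i, x i ^ 2 - s ^ 2 / Fintype.card ι := by
  rcases isEmpty_or_nonempty ι with hι | hι
  · simp [← hs]
  have hn : (Fintype.card ι : ℝ) ≠ 0 := by positivity
  simp only [sub_sq, sum_add_distrib, sum_sub_distrib, ← sum_mul, ← mul_sum, hs, sum_const,
    card_univ, nsmul_eq_mul]
  field_simp
  ring

/-- The Laguerre–Samuelson inequality. -/
theorem card_mul_sq_le_of_sum_eq_zero {x : ι → ℝ} (hx : ∑ i, x i = 0) (i : ι) :
    Fintype.card ι * x i ^ 2 ≤ (Fintype.card ι - 1) * ∑ j, x j ^ 2 := by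
  classical
  have hrest : ∑ j ∈ univ.erase i, x j = -x i := by
    rw [sum_erase_eq_sub (mem_univ i), hx, zero_sub]
  have hcs := sq_sum_le_card_mul_sum_sq (s := univ.erase i) (f := x)
  rw [hrest, card_erase_of_mem (mem_univ i), card_univ,
    Nat.cast_pred (Fintype.card_pos_iff.2 ⟨i⟩), sum_erase_eq_sub (mem_univ i)] at hcs
  nlinarith

theorem sq_sub_div_two_le_sum_sq_sub (x : ι → ℝ) (c : ℝ) (u w : ι) :
    (x u - x w) ^ 2 / 2 ≤ ∑ i, (x i - c) ^ 2 := by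
  classical
  rcases eq_or_ne u w with rfl | huw
  · simp only [sub_self, ne_eq, OfNat.ofNat_ne_zero, not_false_eq_true, zero_pow, zero_div]
    positivity
  have hpair : (x u - c) ^ 2 + (x w - c) ^ 2 ≤ ∑ i, (x i - c) ^ 2 := by
    rw [← sum_pair huw (f := fun i => (x i - c) ^ 2)]
    exact sum_le_sum_of_subset_of_nonneg (subset_univ _) fun i _ _ => sq_nonneg _
  nlinarith [sq_nonneg (x u + x w - 2 * c)]

theorem sq_add_two_mul_sq_le_of_mem_Icc {x a : ℝ} (hx : x ∈ Set.Icc a (2 * a)) :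
    x ^ 2 + 2 * a ^ 2 ≤ 3 * a * x := by
  nlinarith [mul_nonneg (sub_nonneg.2 hx.1) (sub_nonneg.2 hx.2)]

theorem sum_sq_add_le_of_mem_Icc {γ : ι → ℝ} {a : ℝ} (hγ : ∀ i, γ i ∈ Set.Icc a (2 * a)) :
    ∑ i, γ i ^ 2 + 2 * Fintype.card ι * a ^ 2 ≤ 3 * a * ∑ i, γ i := by
  calc ∑ i, γ i ^ 2 + 2 * Fintype.card ι * a ^ 2 = ∑ i, (γ i ^ 2 + 2 * a ^ 2) := by
        rw [sum_add_distrib, sum_const, card_univ, nsmul_eq_mul]; ring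
    _ ≤ ∑ i, 3 * a * γ i := sum_le_sum fun i _ => sq_add_two_mul_sq_le_of_mem_Icc (hγ i)
    _ = 3 * a * ∑ i, γ i := (mul_sum ..).symm

theorem sqrt_two_mul_sqrt_eq_sqrt_mul_sqrt (T n : ℝ) (hn : 0 ≤ n) :
    √2 * √(T * n) = √T * √(2 * n) := by
  rw [← Real.sqrt_mul zero_le_two, ← Real.sqrt_mul' _ (by positivity)]
  ring_nf

theorem sqrt_two_mul_sqrt_le_sum_of_mem_Icc {γ : ι → ℝ} {a : ℝ} (ha : 0 < a)
    (hγ : ∀ i, γ i ∈ Set.Icc a (2 * a)) :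
    2 * √2 / 3 * √((∑ i, γ i ^ 2) * Fintype.card ι) ≤ ∑ i, γ i := by
  have hsum := sum_sq_add_le_of_mem_Icc hγ
  have hT : √(∑ i, γ i ^ 2) ^ 2 = ∑ i, γ i ^ 2 := Real.sq_sqrt (by positivity)
  have hn : √(2 * Fintype.card ι) ^ 2 = 2 * Fintype.card ι := Real.sq_sqrt (by positivity)
  rw [mul_div_right_comm, mul_assoc, sqrt_two_mul_sqrt_eq_sqrt_mul_sqrt _ _ (by positivity)]
  nlinarith [sq_nonneg (√(∑ i, γ i ^ 2) - √(2 * Fintype.card ι) * a)]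

theorem sum_sq_eq_and_eq_or_eq_of_sum_eq {γ : ι → ℝ} {a : ℝ} (ha : 0 < a)
    (hγ : ∀ i, γ i ∈ Set.Icc a (2 * a))
    (heq : ∑ i, γ i = 2 * √2 / 3 * √((∑ i, γ i ^ 2) * Fintype.card ι)) :
    ∑ i, γ i ^ 2 = 2 * Fintype.card ι * a ^ 2 ∧ ∀ i, γ i = a ∨ γ i = 2 * a := by
  have hsum := sum_sq_add_le_of_mem_Icc hγ
  have hT : √(∑ i, γ i ^ 2) ^ 2 = ∑ i, γ i ^ 2 := Real.sq_sqrt (by positivity)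
  have hn : √(2 * Fintype.card ι) ^ 2 = 2 * Fintype.card ι := Real.sq_sqrt (by positivity)
  rw [mul_div_right_comm, mul_assoc, sqrt_two_mul_sqrt_eq_sqrt_mul_sqrt _ _ (by positivity)]
    at heq
  have hsq : (√(∑ i, γ i ^ 2) - √(2 * Fintype.card ι) * a) ^ 2 = 0 := by
    nlinarith [sq_nonneg (√(∑ i, γ i ^ 2) - √(2 * Fintype.card ι) * a)]
  have hroot := sub_eq_zero.1 (pow_eq_zero_iff two_ne_zero |>.1 hsq)
  have hT' : ∑ i, γ i ^ 2 = 2 * Fintype.card ι * a ^ 2 := by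
    rw [← hT, hroot, mul_pow, hn]
  refine ⟨hT', fun i => ?_⟩
  have hslack : ∀ j ∈ univ, 0 ≤ 3 * a * γ j - (γ j ^ 2 + 2 * a ^ 2) := fun j _ =>
    sub_nonneg.2 (sq_add_two_mul_sq_le_of_mem_Icc (hγ j))
  have hzero : ∑ j, (3 * a * γ j - (γ j ^ 2 + 2 * a ^ 2)) = 0 := by
    rw [sum_sub_distrib, ← mul_sum, sum_add_distrib, sum_const, card_univ, nsmul_eq_mul]
    nlinarith
  have hi := (sum_eq_zero_iff_of_nonneg hslack).1 hzero i (mem_univ i)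
  have : (γ i - a) * (γ i - 2 * a) = 0 := by linear_combination -hi
  rcases mul_eq_zero.1 this with h | h
  · exact Or.inl (sub_eq_zero.1 h)
  · exact Or.inr (sub_eq_zero.1 h)

end RealVectors

theorem SimpleGraph.eq_top_of_iso_top {V W : Type*} {G : SimpleGraph V}
    (φ : G ≃g (⊤ : SimpleGraph W)) : G = ⊤ := by
  ext u v
  rw [← φ.map_adj_iff]
  simp [φ.injective.ne_iff]

namespace SimpleGraph

variable {V : Type*} [Fintype V] (G : SimpleGraph V) [DecidableRel G.Adj]

theorem sum_sum_neighborFinset (f : V → ℝ) :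
    ∑ u, ∑ v ∈ G.neighborFinset u, f v = ∑ v, G.degree v * f v := by
  rw [sum_comm' (t' := univ) (s' := fun v => G.neighborFinset v) (by simp [adj_comm])]
  simp [card_neighborFinset_eq_degree]

theorem degree_le_card_sub_one (v : V) : (G.degree v : ℝ) ≤ Fintype.card V - 1 := by
  rw [le_sub_iff_add_le]
  exact_mod_cast G.degree_lt_card_verts v

theorem sum_neighborFinset_degree_le_mul (u : V) :
    ∑ v ∈ G.neighborFinset u, (G.degree v : ℝ) ≤ G.degree u * (Fintype.card V - 1) := by
  calc ∑ v ∈ G.neighborFinset u, (G.degree v : ℝ)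
      ≤ ∑ v ∈ G.neighborFinset u, ((Fintype.card V : ℝ) - 1) :=
        sum_le_sum fun v _ => G.degree_le_card_sub_one v
    _ = G.degree u * (Fintype.card V - 1) := by
        rw [sum_const, G.card_neighborFinset_eq_degree, nsmul_eq_mul]

theorem sq_maxDegree_sub_minDegree_div_two_le [Nonempty V] (c : ℝ) :
    ((G.maxDegree : ℝ) - G.minDegree) ^ 2 / 2 ≤ ∑ v, ((G.degree v : ℝ) - c) ^ 2 := by
  obtain ⟨u, hu⟩ := G.exists_maximal_degree_vertex
  obtain ⟨w, hw⟩ := G.exists_minimal_degree_vertex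
  rw [hu, hw]
  exact sq_sub_div_two_le_sum_sq_sub (fun v => (G.degree v : ℝ)) c u w

theorem two_le_card_of_one_le_card_edgeFinset [DecidableEq V] (hm : 1 ≤ #G.edgeFinset) :
    2 ≤ Fintype.card V := by
  by_contra! h
  have := G.card_edgeFinset_le_card_choose_two
  rw [Nat.choose_eq_zero_of_lt h] at this
  omega

theorem nonempty_of_one_le_card_edgeFinset [DecidableEq V] (hm : 1 ≤ #G.edgeFinset) :
    Nonempty V :=
  Fintype.card_pos_iff.1 (by have := G.two_le_card_of_one_le_card_edgeFinset hm; omega)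

end SimpleGraph

section SignlessLaplacian

variable {V : Type*} [Fintype V] [DecidableEq V] (G : SimpleGraph V) [DecidableRel G.Adj]

theorem sum_degree_eq_two_mul_mE : ∑ v, (G.degree v : ℝ) = 2 * mE G := by
  rw [mE, ← Nat.cast_sum, G.sum_degrees_eq_twice_card_edges]
  push_cast
  ring

theorem two_mul_mE_le : 2 * mE G ≤ Fintype.card V * (Fintype.card V - 1) := by
  have h : (#G.edgeFinset : ℝ) ≤ (Fintype.card V).choose 2 :=
    mod_cast G.card_edgeFinset_le_card_choose_two
  rw [Nat.cast_choose_two] at h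
  rw [mE]
  linarith

theorem trace_signlessLaplacian : (signlessLaplacian G).trace = 2 * mE G := by
  rw [signlessLaplacian, trace_add, trace_diagonal, SimpleGraph.trace_adjMatrix, add_zero,
    sum_degree_eq_two_mul_mE]

theorem trace_signlessLaplacian_sq : (signlessLaplacian G ^ 2).trace = M1 G + 2 * mE G := by
  have hdiag : ∀ v, (signlessLaplacian G ^ 2) v v = (G.degree v : ℝ) ^ 2 + G.degree v := by
    intro v
    rw [sq, signlessLaplacian, add_mul, mul_add, mul_add, Matrix.add_apply, Matrix.add_apply,
      Matrix.add_apply, G.adjMatrix_mul_self_apply_self, diagonal_mul, diagonal_mul,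
      mul_diagonal]
    simp [sq]
  simp only [Matrix.trace, Matrix.diag, hdiag, sum_add_distrib, M1, sum_degree_eq_two_mul_mE]

theorem sum_qEig : ∑ i, qEig G i = 2 * mE G := by
  simpa [qEig, trace_signlessLaplacian] using
    ((signlessLaplacian_isHermitian G).trace_pow_eq_sum_eigenvalues_pow 1).symm

theorem sum_qEig_sq : ∑ i, qEig G i ^ 2 = M1 G + 2 * mE G := by
  simpa [qEig, trace_signlessLaplacian_sq] using
    ((signlessLaplacian_isHermitian G).trace_pow_eq_sum_eigenvalues_pow 2).symm

theorem sum_neighborFinset_degree_le (hdeg : ∀ v, 0 < G.degree v) (u : V) :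
    ∑ v ∈ G.neighborFinset u, (G.degree v : ℝ) ≤ 2 * mE G - Fintype.card V + 1 := by
  have hsub : ∑ v ∈ insert u (G.neighborFinset u), ((G.degree v : ℝ) - 1) ≤
      ∑ v, ((G.degree v : ℝ) - 1) :=
    sum_le_sum_of_subset_of_nonneg (subset_univ _) fun v _ _ =>
      sub_nonneg.2 (mod_cast hdeg v)
  rw [sum_insert (G.notMem_neighborFinset_self u), sum_sub_distrib, sum_sub_distrib,
    sum_degree_eq_two_mul_mE G] at hsub
  simp only [sum_const, G.card_neighborFinset_eq_degree, card_univ, nsmul_eq_mul,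
    mul_one] at hsub
  linarith

theorem card_sub_one_mul_degree_sq_add_sum_le (hdeg : ∀ v, 0 < G.degree v) (u : V) :
    (Fintype.card V - 1) * ((G.degree u : ℝ) ^ 2 + ∑ v ∈ G.neighborFinset u, (G.degree v : ℝ))
      ≤ (2 * mE G + (Fintype.card V - 2) * (Fintype.card V - 1)) * G.degree u := by
  have hS := sum_neighborFinset_degree_le G hdeg u
  have hS' := G.sum_neighborFinset_degree_le_mul u
  have hd := G.degree_le_card_sub_one u
  have hd0 : (0 : ℝ) ≤ G.degree u := Nat.cast_nonneg _
  nlinarith [mul_le_mul_of_nonneg_left hS hd0, mul_nonneg (sub_nonneg.2 hd) (sub_nonneg.2 hS')]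

/-- de Caen's inequality. -/
theorem card_sub_one_mul_M1_le (hdeg : ∀ v, 0 < G.degree v) :
    (Fintype.card V - 1) * M1 G ≤
      2 * mE G ^ 2 + mE G * (Fintype.card V - 1) * (Fintype.card V - 2) := by
  have hsum := sum_le_sum fun u (_ : u ∈ univ) => card_sub_one_mul_degree_sq_add_sum_le G hdeg u
  rw [← mul_sum, ← mul_sum, sum_add_distrib, G.sum_sum_neighborFinset,
    sum_degree_eq_two_mul_mE G] at hsum
  simp only [← sq, M1] at hsum ⊢
  linarith

end SignlessLaplacian

section Deviation

variable {V : Type*} [Fintype V] [DecidableEq V] (G : SimpleGraph V) [DecidableRel G.Adj]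

/-- The constant `c` of the hypothesis `γₙ ≥ √c / (2n)`. -/
noncomputable def deCaenBound : ℝ :=
  mE G * ((Fintype.card V : ℝ) ^ 3 - (Fintype.card V : ℝ) ^ 2
    - 2 * mE G * Fintype.card V + 4 * mE G)

theorem deCaenBound_pos (hm : 1 ≤ #G.edgeFinset) : 0 < deCaenBound G := by
  have hn : (2 : ℝ) ≤ Fintype.card V := mod_cast G.two_le_card_of_one_le_card_edgeFinset hm
  have hm' : (1 : ℝ) ≤ mE G := by rw [mE]; exact_mod_cast hm
  have h2m := mul_le_mul_of_nonneg_right (two_mul_mE_le G) (sub_nonneg.2 hn)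
  have hfactor : 0 < (Fintype.card V : ℝ) ^ 3 - (Fintype.card V : ℝ) ^ 2
      - 2 * mE G * Fintype.card V + 4 * mE G := by nlinarith
  exact mul_pos (by linarith) hfactor

theorem sum_sq_qEig_sub_eq :
    ∑ i, (qEig G i - 2 * mE G / Fintype.card V) ^ 2 =
      2 * mE G + ∑ v, ((G.degree v : ℝ) - 2 * mE G / Fintype.card V) ^ 2 := by
  rw [sum_sq_sub_div_card_eq (sum_qEig G), sum_sq_sub_div_card_eq (sum_degree_eq_two_mul_mE G),
    sum_qEig_sq, M1]
  ring

theorem card_mul_card_sub_one_mul_sum_sq_qEig_sub_le (hdeg : ∀ v, 0 < G.degree v) :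
    Fintype.card V * (Fintype.card V - 1) * ∑ i, (qEig G i - 2 * mE G / Fintype.card V) ^ 2
      ≤ deCaenBound G := by
  rcases isEmpty_or_nonempty V with hV | hV
  · simp [deCaenBound]
    nlinarith [sq_nonneg (mE G)]
  have hn : (0 : ℝ) < Fintype.card V := by positivity
  have hdc := mul_le_mul_of_nonneg_left (card_sub_one_mul_M1_le G hdeg) hn.le
  rw [sum_sq_sub_div_card_eq (sum_qEig G), sum_qEig_sq, deCaenBound]
  have hexp : (Fintype.card V : ℝ) * (Fintype.card V - 1) *
      (M1 G + 2 * mE G - (2 * mE G) ^ 2 / Fintype.card V) =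
      Fintype.card V * ((Fintype.card V - 1) * M1 G) +
        (Fintype.card V - 1) * (2 * mE G * Fintype.card V - 4 * mE G ^ 2) := by
    field_simp
    ring
  rw [hexp]
  nlinarith

theorem abs_qEig_sub_le (hdeg : ∀ v, 0 < G.degree v) (i : V) :
    |qEig G i - 2 * mE G / Fintype.card V| ≤ √(deCaenBound G) / Fintype.card V := by
  have hn : (0 : ℝ) < Fintype.card V := Nat.cast_pos.2 (Fintype.card_pos_iff.2 ⟨i⟩)
  have hLS := card_mul_sq_le_of_sum_eq_zero (sum_sub_div_card_eq_zero (sum_qEig G)) i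
  have hT := card_mul_card_sub_one_mul_sum_sq_qEig_sub_le G hdeg
  rw [le_div_iff₀ hn, ← abs_of_pos hn, ← abs_mul, abs_of_pos hn]
  apply Real.abs_le_sqrt
  nlinarith [mul_le_mul_of_nonneg_left hLS hn.le]

end Deviation

section Energy

variable {V : Type*} [Fintype V] [DecidableEq V] (G : SimpleGraph V) [DecidableRel G.Adj]

theorem le_sum_sq_qEig_sub [Nonempty V] :
    2 * mE G + ((G.maxDegree : ℝ) - G.minDegree) ^ 2 / 2 ≤
      ∑ i, (qEig G i - 2 * mE G / Fintype.card V) ^ 2 := by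
  rw [sum_sq_qEig_sub_eq]
  linarith [G.sq_maxDegree_sub_minDegree_div_two_le (2 * mE G / Fintype.card V)]

theorem abs_qEig_sub_mem_Icc (hdeg : ∀ v, 0 < G.degree v)
    (hdev : ∀ i, √(deCaenBound G) / (2 * Fintype.card V) ≤
      |qEig G i - 2 * mE G / Fintype.card V|) (i : V) :
    |qEig G i - 2 * mE G / Fintype.card V| ∈
      Set.Icc (√(deCaenBound G) / (2 * Fintype.card V))
        (2 * (√(deCaenBound G) / (2 * Fintype.card V))) := by
  refine ⟨hdev i, ?_⟩
  rw [← mul_div_assoc, mul_div_mul_left _ _ two_ne_zero]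
  exact abs_qEig_sub_le G hdeg i

theorem sqrt_sum_sq_qEig_sub_le_QE (hdeg : ∀ v, 0 < G.degree v) (hm : 1 ≤ #G.edgeFinset)
    (hdev : ∀ i, √(deCaenBound G) / (2 * Fintype.card V) ≤
      |qEig G i - 2 * mE G / Fintype.card V|) :
    2 * √2 / 3 * √((∑ i, (qEig G i - 2 * mE G / Fintype.card V) ^ 2) * Fintype.card V) ≤
      QE G := by
  have hn : (0 : ℝ) < Fintype.card V := by
    have := G.two_le_card_of_one_le_card_edgeFinset hm
    positivity
  have ha : 0 < √(deCaenBound G) / (2 * Fintype.card V) :=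
    div_pos (Real.sqrt_pos.2 (deCaenBound_pos G hm)) (by positivity)
  simpa [QE, sq_abs] using
    sqrt_two_mul_sqrt_le_sum_of_mem_Icc ha (abs_qEig_sub_mem_Icc G hdeg hdev)

theorem QE_lower_bound (hdeg : ∀ v, 0 < G.degree v) (hm : 1 ≤ #G.edgeFinset)
    (hdev : ∀ i, √(deCaenBound G) / (2 * Fintype.card V) ≤
      |qEig G i - 2 * mE G / Fintype.card V|) :
    2 * √2 / 3 * √((2 * mE G + ((G.maxDegree : ℝ) - G.minDegree) ^ 2 / 2) * Fintype.card V) ≤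
      QE G := by
  have : Nonempty V := G.nonempty_of_one_le_card_edgeFinset hm
  calc _ ≤ 2 * √2 / 3 *
          √((∑ i, (qEig G i - 2 * mE G / Fintype.card V) ^ 2) * Fintype.card V) := by
        gcongr
        exact le_sum_sq_qEig_sub G
    _ ≤ QE G := sqrt_sum_sq_qEig_sub_le_QE G hdeg hm hdev

theorem card_eq_three_of_sum_sq_qEig_sub_eq (hdeg : ∀ v, 0 < G.degree v)
    (hm : 1 ≤ #G.edgeFinset) {a : ℝ} (ha : a = √(deCaenBound G) / (2 * Fintype.card V))
    (hT : ∑ i, (qEig G i - 2 * mE G / Fintype.card V) ^ 2 = 2 * Fintype.card V * a ^ 2)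
    (hdich : ∀ i, |qEig G i - 2 * mE G / Fintype.card V| = a ∨
      |qEig G i - 2 * mE G / Fintype.card V| = 2 * a) :
    Fintype.card V = 3 := by
  have hn : (0 : ℝ) < Fintype.card V := by
    have := G.two_le_card_of_one_le_card_edgeFinset hm
    positivity
  have ha0 : 0 < a := ha ▸ div_pos (Real.sqrt_pos.2 (deCaenBound_pos G hm)) (by positivity)
  have hc : deCaenBound G = 4 * Fintype.card V ^ 2 * a ^ 2 := by
    rw [ha, div_pow, Real.sq_sqrt (deCaenBound_pos G hm).le]
    field_simp
    ring
  obtain ⟨i, hi⟩ : ∃ i, |qEig G i - 2 * mE G / Fintype.card V| = 2 * a := by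
    by_contra! h
    have : ∑ i, (qEig G i - 2 * mE G / Fintype.card V) ^ 2 = Fintype.card V * a ^ 2 := by
      simp [← sq_abs, fun i => (hdich i).resolve_right (h i)]
    nlinarith [mul_pos hn (pow_pos ha0 2)]
  have hLS := card_mul_sq_le_of_sum_eq_zero (sum_sub_div_card_eq_zero (sum_qEig G)) i
  have hdC := card_mul_card_sub_one_mul_sum_sq_qEig_sub_le G hdeg
  rw [← sq_abs, hi, hT] at hLS
  rw [hT, hc] at hdC
  have hna : 0 < (Fintype.card V : ℝ) ^ 2 * a ^ 2 := by positivity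
  have : (Fintype.card V : ℝ) = 3 := by nlinarith
  exact_mod_cast this

theorem eq_top_of_card_eq_three (h3 : Fintype.card V = 3) (hm : 1 ≤ #G.edgeFinset)
    (hvar : ∑ v, ((G.degree v : ℝ) - 2 * mE G / Fintype.card V) ^ 2 =
      ((G.maxDegree : ℝ) - G.minDegree) ^ 2 / 2) :
    G = ⊤ := by
  obtain ⟨k, hk⟩ : ∃ k : ℕ, (G.maxDegree : ℝ) - G.minDegree = k :=
    ⟨G.maxDegree - G.minDegree, (Nat.cast_sub G.minDegree_le_maxDegree).symm⟩
  rw [sum_sq_sub_div_card_eq (sum_degree_eq_two_mul_mE G), h3, hk, mE] at hvar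
  have hint : 6 * ∑ v, G.degree v ^ 2 = 8 * #G.edgeFinset ^ 2 + 3 * k ^ 2 := by
    have : ((6 * ∑ v, G.degree v ^ 2 : ℕ) : ℝ) =
        ((8 * #G.edgeFinset ^ 2 + 3 * k ^ 2 : ℕ) : ℝ) := by
      push_cast at hvar ⊢
      linarith
    exact_mod_cast this
  have hle := G.card_edgeFinset_le_card_choose_two
  rw [h3, show Nat.choose 3 2 = 3 by rfl] at hle
  -- modulo 3, `hint` says `3 ∣ 8m²`, hence `3 ∣ m`
  have hm3 : #G.edgeFinset = 3 := by
    generalize ∑ v, G.degree v ^ 2 = M at hint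
    generalize k ^ 2 = K at hint
    interval_cases #G.edgeFinset <;> omega
  refine SimpleGraph.edgeFinset_inj.1 (eq_of_subset_of_card_le (G.edgeFinset_mono le_top) ?_)
  rw [SimpleGraph.card_edgeFinset_top_eq_card_choose_two, h3, hm3]
  rfl

theorem card_eq_three_and_eq_top_of_QE_eq (hdeg : ∀ v, 0 < G.degree v) (hm : 1 ≤ #G.edgeFinset)
    (hdev : ∀ i, √(deCaenBound G) / (2 * Fintype.card V) ≤
      |qEig G i - 2 * mE G / Fintype.card V|)
    (heq : QE G = 2 * √2 / 3 *
      √((2 * mE G + ((G.maxDegree : ℝ) - G.minDegree) ^ 2 / 2) * Fintype.card V)) :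
    Fintype.card V = 3 ∧ G = ⊤ := by
  have : Nonempty V := G.nonempty_of_one_le_card_edgeFinset hm
  have hX := le_sum_sq_qEig_sub G
  have hX0 : 0 ≤ 2 * mE G + ((G.maxDegree : ℝ) - G.minDegree) ^ 2 / 2 := by
    have : (0 : ℝ) ≤ mE G := Nat.cast_nonneg _
    positivity
  have hXT : 2 * mE G + ((G.maxDegree : ℝ) - G.minDegree) ^ 2 / 2 =
      ∑ i, (qEig G i - 2 * mE G / Fintype.card V) ^ 2 := by
    have hle := sqrt_sum_sq_qEig_sub_le_QE G hdeg hm hdev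
    rw [heq] at hle
    have hge := le_of_mul_le_mul_left hle (by positivity)
    have := le_antisymm (Real.sqrt_le_sqrt (mul_le_mul_of_nonneg_right hX (by positivity))) hge
    rw [Real.sqrt_inj (by positivity) (by positivity)] at this
    exact mul_right_cancel₀ (by positivity) this
  have ha : 0 < √(deCaenBound G) / (2 * Fintype.card V) :=
    div_pos (Real.sqrt_pos.2 (deCaenBound_pos G hm)) (by positivity)
  obtain ⟨hT, hdich⟩ := sum_sq_eq_and_eq_or_eq_of_sum_eq ha (abs_qEig_sub_mem_Icc G hdeg hdev)
    (by simpa [QE, sq_abs, ← hXT] using heq)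
  have h3 := card_eq_three_of_sum_sq_qEig_sub_eq G hdeg hm rfl (by simpa [sq_abs] using hT) hdich
  refine ⟨h3, eq_top_of_card_eq_three G h3 hm ?_⟩
  rw [sum_sq_qEig_sub_eq] at hXT
  linarith

end Energy

section CompleteGraph

variable {V : Type*} [Fintype V] [DecidableEq V]

theorem signlessLaplacian_top :
    signlessLaplacian (⊤ : SimpleGraph V) =
      ((Fintype.card V : ℝ) - 2) • (1 : Matrix V V ℝ) + of fun _ _ => 1 := by
  ext i j
  rcases eq_or_ne i j with rfl | h
  · have : Nonempty V := ⟨i⟩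
    simp only [signlessLaplacian, SimpleGraph.complete_graph_degree,
      Nat.cast_sub Fintype.card_pos, Nat.succ_eq_add_one, zero_add, Nat.cast_one,
      SimpleGraph.adjMatrix_top, Matrix.add_apply, diagonal_apply_eq, of_apply, ↓reduceIte,
      add_zero, Matrix.smul_apply, one_apply_eq, smul_eq_mul, mul_one]
    ring
  · simp [signlessLaplacian, h]

theorem qEig_top_eq_or_eq (i : V) :
    qEig (⊤ : SimpleGraph V) i = Fintype.card V - 2 ∨
      qEig (⊤ : SimpleGraph V) i = 2 * Fintype.card V - 2 := by
  have hJ : (of fun _ _ => 1 : Matrix V V ℝ) * (of fun _ _ => 1) =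
      (Fintype.card V : ℝ) • of fun _ _ => 1 := by
    ext
    simp [mul_apply]
  refine (signlessLaplacian_isHermitian _).eigenvalues_eq_or_eq ?_ i
  rw [signlessLaplacian_top, add_sub_cancel_left, show ∀ M : Matrix V V ℝ,
    ((Fintype.card V : ℝ) - 2) • 1 + M - (2 * (Fintype.card V : ℝ) - 2) • 1 =
      M - (Fintype.card V : ℝ) • 1 from fun M => by module, mul_sub, hJ, mul_smul_comm, mul_one,
    sub_self]

theorem QE_top [Nonempty V] : QE (⊤ : SimpleGraph V) = 2 * (Fintype.card V - 1) := by
  have hn : (1 : ℝ) ≤ Fintype.card V := Nat.one_le_cast.2 Fintype.card_pos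
  have hm : 2 * mE (⊤ : SimpleGraph V) = Fintype.card V * (Fintype.card V - 1) := by
    rw [mE, SimpleGraph.card_edgeFinset_top_eq_card_choose_two, Nat.cast_choose_two]
    ring
  -- the affine function of `q` that agrees with `|q - (n - 1)|` at `q = n - 2` and `q = 2n - 2`
  have habs : ∀ i, |qEig (⊤ : SimpleGraph V) i - 2 * mE (⊤ : SimpleGraph V) / Fintype.card V| =
      1 + (Fintype.card V - 2) / Fintype.card V *
        (qEig (⊤ : SimpleGraph V) i - (Fintype.card V - 2)) := by
    intro i
    rw [hm, mul_div_cancel_left₀ _ (by positivity)]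
    rcases qEig_top_eq_or_eq i with h | h <;> rw [h]
    · norm_num
    · rw [show 2 * (Fintype.card V : ℝ) - 2 - (Fintype.card V - 1) = Fintype.card V - 1 by ring,
        abs_of_nonneg (by linarith)]
      field_simp
      ring
  rw [QE, sum_congr rfl fun i _ => habs i, sum_add_distrib, ← mul_sum, sum_sub_distrib, sum_qEig,
    hm]
  simp only [sum_const, card_univ, nsmul_eq_mul]
  field_simp
  ring

theorem QE_top_of_card_eq_three (h3 : Fintype.card V = 3) :
    QE (⊤ : SimpleGraph V) = 2 * √2 / 3 * √((2 * mE (⊤ : SimpleGraph V) +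
      (((⊤ : SimpleGraph V).maxDegree : ℝ) - (⊤ : SimpleGraph V).minDegree) ^ 2 / 2) *
        Fintype.card V) := by
  have : Nonempty V := Fintype.card_pos_iff.1 (by omega)
  have h36 : √2 * √18 = 6 := by
    rw [← Real.sqrt_mul zero_le_two, show (2 : ℝ) * 18 = 6 ^ 2 by norm_num,
      Real.sqrt_sq (by norm_num)]
  rw [QE_top, SimpleGraph.maxDegree_top, SimpleGraph.minDegree_top, mE,
    SimpleGraph.card_edgeFinset_top_eq_card_choose_two, h3]
  norm_num [Nat.choose]
  linarith

end CompleteGraph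

/-- Lower bound for `QE(G)` of a connected graph under `γₙ ≥ √c/(2n)` with
`c = m(n³ - n² - 2mn + 4m)`: `QE(G) ≥ (2√2/3)√((2m + (Δ-δ)²/2)·n)`, with equality
iff `G ≅ K₃`. -/
theorem QE_lower_bound_cor {n : ℕ} (hn : 2 ≤ n) (G : SimpleGraph (Fin n))
    [DecidableRel G.Adj] (hconn : G.Connected) (hm : 1 ≤ G.edgeFinset.card)
    (γ : Fin n → ℝ) (e : Equiv.Perm (Fin n))
    (hγ : ∀ i, γ i = |qEig G (e i) - 2 * mE G / (n : ℝ)|)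
    (hmono : Antitone γ)
    (hlow : γ ⟨n - 1, by omega⟩
      ≥ Real.sqrt (mE G * ((n : ℝ) ^ 3 - (n : ℝ) ^ 2 - 2 * mE G * (n : ℝ) + 4 * mE G))
          / (2 * (n : ℝ))) :
    QE G ≥ (2 * Real.sqrt 2 / 3)
        * Real.sqrt ((2 * mE G + ((G.maxDegree : ℝ) - (G.minDegree : ℝ)) ^ 2 / 2) * (n : ℝ))
    ∧ (QE G = (2 * Real.sqrt 2 / 3)
          * Real.sqrt ((2 * mE G + ((G.maxDegree : ℝ) - (G.minDegree : ℝ)) ^ 2 / 2) * (n : ℝ))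
        ↔ Nonempty (G ≃g SimpleGraph.completeGraph (Fin 3))) := by
  have : Nontrivial (Fin n) := Fin.nontrivial_iff_two_le.2 hn
  have hdeg : ∀ v, 0 < G.degree v := fun v =>
    hconn.preconnected.degree_pos_of_nontrivial v
  have hdev : ∀ i, √(deCaenBound G) / (2 * Fintype.card (Fin n)) ≤
      |qEig G i - 2 * mE G / Fintype.card (Fin n)| := by
    intro i
    rw [deCaenBound, Fintype.card_fin, ← e.apply_symm_apply i, ← hγ]
    exact hlow.trans (hmono (Fin.le_iff_val_le_val.2 (Nat.le_sub_one_of_lt (e.symm i).isLt)))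
  have hbound := QE_lower_bound G hdeg hm hdev
  rw [Fintype.card_fin] at hbound
  refine ⟨hbound, fun heq => ?_, fun ⟨φ⟩ => ?_⟩
  · obtain ⟨h3, rfl⟩ := card_eq_three_and_eq_top_of_QE_eq G hdeg hm hdev (by simpa using heq)
    obtain rfl : n = 3 := by simpa using h3
    exact ⟨SimpleGraph.Iso.refl⟩
  · obtain rfl : n = 3 := by simpa using Fintype.card_congr φ.toEquiv
    obtain rfl : G = ⊤ := G.eq_top_of_iso_top φ
    obtain rfl := Subsingleton.elim ‹DecidableRel (⊤ : SimpleGraph (Fin 3)).Adj›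
      (SimpleGraph.Top.adjDecidable (Fin 3))
    simpa using QE_top_of_card_eq_three (Fintype.card_fin 3)
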